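/- arXiv:1808.04337 — 4 statements merged into one kernel-verified Lean document; each statement's English description precedes it below -/
import Mathlib

section
/- For each p ∈ [1, ∞], the network Gromov–Wasserstein function d_{N,p}(X,Y) := (1/2) min over couplings μ ∈ C(μ_X, μ_Y) of dis_p(μ) is a pseudometric on the collection of measure networks: it is nonnegative, vanishes on identical networks, symmetric, and satisfies the triangle inequality d_{N,p}(X,Z) ≤ d_{N,p}(X,Y) + d_{N,p}(Y,Z). -/
/-! Swapping the factors of a coupling preserves its distortion, and the diagonal coupling of a
network with itself has distortion zero. For the triangle inequality, glue couplings of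
`(μX, μY)` and `(μY, μZ)` along `Y` by disintegrating the second one over `Y`. On the glued
space all three distortion integrands are functions on one product measure, where
`ωX - ωZ = (ωX - ωY) + (ωY - ωZ)` and Minkowski's inequality applies; the `(X, Z)`-marginal of
the glued measure is a coupling of `μX` and `μZ`. -/

open MeasureTheory ENNReal

/-- The set of couplings between two measures: probability-type measures on the product
with the prescribed marginals. -/
def Coupling {X Y : Type*} [MeasurableSpace X] [MeasurableSpace Y]
    (μX : Measure X) (μY : Measure Y) : Set (Measure (X × Y)) :=
  {μ | μ.fst = μX ∧ μ.snd = μY}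

/-- The `p`-distortion of a coupling `μ` between two measure networks, namely
`‖ω_X - ω_Y‖_{L^p(μ ⊗ μ)}` (for `p = ∞` this is the essential supremum). -/
noncomputable def dis {X Y : Type*} [MeasurableSpace X] [MeasurableSpace Y]
    (ωX : X × X → ℝ) (ωY : Y × Y → ℝ) (p : ℝ≥0∞) (μ : Measure (X × Y)) : ℝ≥0∞ :=
  eLpNorm (fun q : (X × Y) × (X × Y) => ωX (q.1.1, q.2.1) - ωY (q.1.2, q.2.2)) p (μ.prod μ)

/-- The network Gromov–Wasserstein distance: half the infimal `p`-distortion over couplings. -/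
noncomputable def dN {X Y : Type*} [MeasurableSpace X] [MeasurableSpace Y]
    (ωX : X × X → ℝ) (ωY : Y × Y → ℝ) (p : ℝ≥0∞) (μX : Measure X) (μY : Measure Y) : ℝ≥0∞ :=
  (1 / 2) * ⨅ μ ∈ Coupling μX μY, dis ωX ωY p μ

open ProbabilityTheory

section Coupling

variable {X Y Z A : Type*} [MeasurableSpace X] [MeasurableSpace Y] [MeasurableSpace Z]
  [MeasurableSpace A] {μX : Measure X} {μY : Measure Y} {μZ : Measure Z}

lemma isFiniteMeasure_of_mem_coupling [IsFiniteMeasure μX] {μ : Measure (X × Y)}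
    (hμ : μ ∈ Coupling μX μY) : IsFiniteMeasure μ :=
  ⟨by rw [← Measure.fst_univ, hμ.1]; exact measure_lt_top μX _⟩

lemma map_swap_mem_coupling {μ : Measure (X × Y)} (hμ : μ ∈ Coupling μX μY) :
    μ.map Prod.swap ∈ Coupling μY μX :=
  ⟨by rw [Measure.fst_map_swap, hμ.2], by rw [Measure.snd_map_swap, hμ.1]⟩

lemma map_diag_mem_coupling (μX : Measure X) : μX.map (fun x => (x, x)) ∈ Coupling μX μX :=
  ⟨by rw [Measure.fst_map_prodMk measurable_id', Measure.map_id'],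
    by rw [Measure.snd_map_prodMk measurable_id', Measure.map_id']⟩

lemma map_prodMk_mem_coupling_trans {m : Measure A} {f : A → X} {g : A → Y} {h : A → Z}
    (hf : Measurable f) (hg : Measurable g) (hh : Measurable h)
    (hfg : m.map (fun a => (f a, g a)) ∈ Coupling μX μY)
    (hgh : m.map (fun a => (g a, h a)) ∈ Coupling μY μZ) :
    m.map (fun a => (f a, h a)) ∈ Coupling μX μZ := by
  refine ⟨?_, ?_⟩
  · rw [Measure.fst_map_prodMk hh, ← hfg.1, Measure.fst_map_prodMk hg]
  · rw [Measure.snd_map_prodMk hf, ← hgh.2, Measure.snd_map_prodMk hg]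

end Coupling

lemma map_prodMap_compProd_comap {α β γ : Type*} [MeasurableSpace α] [MeasurableSpace β]
    [MeasurableSpace γ] (μ : Measure α) [SFinite μ] (κ : Kernel β γ) [IsSFiniteKernel κ]
    {f : α → β} (hf : Measurable f) :
    (μ ⊗ₘ κ.comap f hf).map (Prod.map f id) = μ.map f ⊗ₘ κ := by
  ext s hs
  rw [Measure.map_apply (hf.prodMap measurable_id) hs,
    Measure.compProd_apply (hf.prodMap measurable_id hs), Measure.compProd_apply hs,
    lintegral_map (Kernel.measurable_kernel_prodMk_left hs) hf]
  rfl

lemma exists_glue {X Y Z : Type*} [MeasurableSpace X] [MeasurableSpace Y] [MeasurableSpace Z]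
    [StandardBorelSpace Z] [Nonempty Z] {A : Measure (X × Y)} {B : Measure (Y × Z)}
    [SFinite A] [IsFiniteMeasure B] (hAB : A.snd = B.fst) :
    ∃ m : Measure ((X × Y) × Z), SFinite m ∧
      m.map Prod.fst = A ∧ m.map (Prod.map Prod.snd id) = B := by
  refine ⟨A ⊗ₘ B.condKernel.comap Prod.snd measurable_snd, inferInstance,
    Measure.fst_compProd _ _, ?_⟩
  rw [map_prodMap_compProd_comap, ← Measure.snd, hAB, Measure.disintegrate]

section Distortion

variable {X Y Z A : Type*} [MeasurableSpace X] [MeasurableSpace Y] [MeasurableSpace Z]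
  [MeasurableSpace A] {ωX : X × X → ℝ} {ωY : Y × Y → ℝ} {ωZ : Z × Z → ℝ} {p : ℝ≥0∞}

lemma dis_map (hωX : Measurable ωX) (hωY : Measurable ωY) {m : Measure A} [SFinite m]
    {g : A → X × Y} (hg : Measurable g) :
    dis ωX ωY p (m.map g) =
      eLpNorm (fun q : A × A => ωX ((g q.1).1, (g q.2).1) - ωY ((g q.1).2, (g q.2).2)) p
        (m.prod m) := by
  have hω : Measurable fun q : (X × Y) × (X × Y) => ωX (q.1.1, q.2.1) - ωY (q.1.2, q.2.2) := by
    fun_prop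
  rw [dis, Measure.map_prod_map _ _ hg hg,
    eLpNorm_map_measure hω.aestronglyMeasurable (hg.prodMap hg).aemeasurable]
  rfl

lemma dis_map_swap (hωX : Measurable ωX) (hωY : Measurable ωY) (μ : Measure (X × Y))
    [SFinite μ] : dis ωY ωX p (μ.map Prod.swap) = dis ωX ωY p μ := by
  rw [dis_map hωY hωX measurable_swap, dis, ← eLpNorm_neg]
  congr 1
  funext q
  simp

lemma dis_map_diag (hωX : Measurable ωX) (μ : Measure X) [SFinite μ] :
    dis ωX ωX p (μ.map fun x => (x, x)) = 0 := by
  rw [dis_map hωX hωX (by fun_prop)]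
  simp

lemma dis_map_le_add (hωX : Measurable ωX) (hωY : Measurable ωY) (hωZ : Measurable ωZ)
    (hp : 1 ≤ p) {m : Measure A} [SFinite m] {f : A → X} {g : A → Y} {h : A → Z}
    (hf : Measurable f) (hg : Measurable g) (hh : Measurable h) :
    dis ωX ωZ p (m.map fun a => (f a, h a)) ≤
      dis ωX ωY p (m.map fun a => (f a, g a)) + dis ωY ωZ p (m.map fun a => (g a, h a)) := by
  rw [dis_map hωX hωZ (by fun_prop), dis_map hωX hωY (by fun_prop),
    dis_map hωY hωZ (by fun_prop)]
  have hsplit : (fun q : A × A => ωX (f q.1, f q.2) - ωZ (h q.1, h q.2)) =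
      (fun q => ωX (f q.1, f q.2) - ωY (g q.1, g q.2)) +
        fun q => ωY (g q.1, g q.2) - ωZ (h q.1, h q.2) := by
    funext q
    simp only [Pi.add_apply]
    ring
  rw [hsplit]
  exact eLpNorm_add_le (by fun_prop) (by fun_prop) hp

end Distortion

section NetworkDistance

variable {X Y Z : Type*} [MeasurableSpace X] [MeasurableSpace Y] [MeasurableSpace Z]
  {μX : Measure X} {μY : Measure Y} {μZ : Measure Z}
  {ωX : X × X → ℝ} {ωY : Y × Y → ℝ} {ωZ : Z × Z → ℝ} {p : ℝ≥0∞}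

lemma dN_self [SFinite μX] (hωX : Measurable ωX) : dN ωX ωX p μX μX = 0 := by
  refine le_antisymm ?_ zero_le
  calc dN ωX ωX p μX μX ≤ (1 / 2) * dis ωX ωX p (μX.map fun x => (x, x)) :=
        by unfold dN; gcongr; exact iInf₂_le _ (map_diag_mem_coupling μX)
    _ = 0 := by rw [dis_map_diag hωX, mul_zero]

lemma iInf_dis_le_iInf_dis_swap [IsFiniteMeasure μX] (hωX : Measurable ωX)
    (hωY : Measurable ωY) :
    ⨅ μ ∈ Coupling μY μX, dis ωY ωX p μ ≤ ⨅ μ ∈ Coupling μX μY, dis ωX ωY p μ := by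
  refine le_iInf₂ fun μ hμ => ?_
  have := isFiniteMeasure_of_mem_coupling hμ
  rw [← dis_map_swap hωX hωY μ]
  exact iInf₂_le _ (map_swap_mem_coupling hμ)

lemma dN_comm [IsFiniteMeasure μX] [IsFiniteMeasure μY] (hωX : Measurable ωX)
    (hωY : Measurable ωY) : dN ωX ωY p μX μY = dN ωY ωX p μY μX := by
  rw [dN, dN,
    le_antisymm (iInf_dis_le_iInf_dis_swap hωY hωX) (iInf_dis_le_iInf_dis_swap hωX hωY)]

lemma dN_triangle [IsFiniteMeasure μX] [IsFiniteMeasure μY] [StandardBorelSpace Z]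
    [Nonempty Z] (hωX : Measurable ωX) (hωY : Measurable ωY) (hωZ : Measurable ωZ) (hp : 1 ≤ p) :
    dN ωX ωZ p μX μZ ≤ dN ωX ωY p μX μY + dN ωY ωZ p μY μZ := by
  rw [dN, dN, dN, ← mul_add]
  gcongr
  refine ENNReal.le_iInf₂_add_iInf₂ fun A hA B hB => ?_
  have := isFiniteMeasure_of_mem_coupling hA
  have := isFiniteMeasure_of_mem_coupling hB
  obtain ⟨m, hm, hmA, hmB⟩ := exists_glue (hA.2.trans hB.1.symm)
  have hf : Measurable fun q : (X × Y) × Z => q.1.1 := by fun_prop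
  have hg : Measurable fun q : (X × Y) × Z => q.1.2 := by fun_prop
  have hh : Measurable fun q : (X × Y) × Z => q.2 := by fun_prop
  subst hmA hmB
  exact (iInf₂_le _ (map_prodMk_mem_coupling_trans hf hg hh hA hB)).trans
    (dis_map_le_add hωX hωY hωZ hp hf hg hh)

end NetworkDistance

theorem dN_pseudometric_general
    {X Y Z : Type*} [MeasurableSpace X] [MeasurableSpace Y]
    [TopologicalSpace Z] [PolishSpace Z] [MeasurableSpace Z] [BorelSpace Z]
    (μX : Measure X) (μY : Measure Y) (μZ : Measure Z)
    [IsProbabilityMeasure μX] [IsProbabilityMeasure μY] [IsProbabilityMeasure μZ]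
    (ωX : X × X → ℝ) (ωY : Y × Y → ℝ) (ωZ : Z × Z → ℝ)
    (hωX : Measurable ωX) (hωY : Measurable ωY) (hωZ : Measurable ωZ)
    (p : ℝ≥0∞) (hp : 1 ≤ p) :
    0 ≤ dN ωX ωY p μX μY ∧
    dN ωX ωX p μX μX = 0 ∧
    dN ωX ωY p μX μY = dN ωY ωX p μY μX ∧
    dN ωX ωZ p μX μZ ≤ dN ωX ωY p μX μY + dN ωY ωZ p μY μZ := by
  have := μZ.nonempty_of_neZero
  exact ⟨zero_le, dN_self hωX, dN_comm hωX hωY, dN_triangle hωX hωY hωZ hp⟩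

/-- **The network Gromov–Wasserstein function is a pseudometric**: it is nonnegative,
vanishes on identical networks, is symmetric, and satisfies the triangle inequality. -/
theorem dN_pseudometric
    {X Y Z : Type*} [TopologicalSpace X] [PolishSpace X] [MeasurableSpace X] [BorelSpace X]
    [TopologicalSpace Y] [PolishSpace Y] [MeasurableSpace Y] [BorelSpace Y]
    [TopologicalSpace Z] [PolishSpace Z] [MeasurableSpace Z] [BorelSpace Z]
    (μX : Measure X) (μY : Measure Y) (μZ : Measure Z)
    [IsProbabilityMeasure μX] [IsProbabilityMeasure μY] [IsProbabilityMeasure μZ]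
    (ωX : X × X → ℝ) (ωY : Y × Y → ℝ) (ωZ : Z × Z → ℝ)
    (hωX : Measurable ωX) (hωY : Measurable ωY) (hωZ : Measurable ωZ)
    (hbX : ∃ M, ∀ q, |ωX q| ≤ M) (hbY : ∃ M, ∀ q, |ωY q| ≤ M) (hbZ : ∃ M, ∀ q, |ωZ q| ≤ M)
    (p : ℝ≥0∞) (hp : 1 ≤ p) :
    0 ≤ dN ωX ωY p μX μY ∧
    dN ωX ωX p μX μX = 0 ∧
    dN ωX ωY p μX μY = dN ωY ωX p μY μX ∧
    dN ωX ωZ p μX μZ ≤ dN ωX ωY p μX μY + dN ωY ωZ p μY μZ :=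
  dN_pseudometric_general μX μY μZ ωX ωY ωZ hωX hωY hωZ p hp
end

section
/- Pushforwards of couplings are exactly the couplings of the pushforwards: if X, Y are Polish spaces with Borel probability measures μ_X, μ_Y, and f : X → ℝ, g : Y → ℝ are Borel measurable, then the map T(x,y) = (f(x), g(y)) satisfies T_*C(μ_X, μ_Y) = C(f_*μ_X, g_*μ_Y), i.e. every coupling of f_*μ_X and g_*μ_Y arises as T_*μ for some coupling μ of μ_X and μ_Y. -/
open MeasureTheory ENNReal

/-! Disintegrate `μX` along `f`: the conditional law `κ = condDistrib id f μX` is a Markov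
kernel `ℝ → X` with `κ ∘ₘ f_*μX = μX` and `f_*(κ a) = δ_a` for `f_*μX`-a.e. `a` (this needs `X`
standard Borel, which is where Polishness enters). A coupling `ν` of `f_*μX` and `g_*μY` then lifts
to `(κ ∥ₖ η) ∘ₘ ν`, whose marginals are `κ ∘ₘ f_*μX = μX` and `η ∘ₘ g_*μY = μY`, and whose image
under `f × g` is `ν` because the lifted kernels push forward to Dirac masses. -/

open ProbabilityTheory

namespace ProbabilityTheory.Kernel

variable {α β γ δ ε ζ : Type*} {mα : MeasurableSpace α} {mβ : MeasurableSpace β}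
  {mγ : MeasurableSpace γ} {mδ : MeasurableSpace δ} {mε : MeasurableSpace ε}
  {mζ : MeasurableSpace ζ}

lemma fst_parallelComp (κ : Kernel α β) [IsSFiniteKernel κ] (η : Kernel γ δ) [IsMarkovKernel η] :
    (κ ∥ₖ η).fst = κ.comap Prod.fst measurable_fst := by
  ext1 x
  rw [fst_apply, parallelComp_apply, Measure.map_fst_prod, measure_univ, one_smul, comap_apply]

lemma snd_parallelComp (κ : Kernel α β) [IsMarkovKernel κ] (η : Kernel γ δ) [IsSFiniteKernel η] :
    (κ ∥ₖ η).snd = η.comap Prod.snd measurable_snd := by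
  ext1 x
  rw [snd_apply, parallelComp_apply, Measure.map_snd_prod, measure_univ, one_smul, comap_apply]

lemma map_prodMap_parallelComp (κ : Kernel α β) [IsSFiniteKernel κ] (η : Kernel γ δ)
    [IsSFiniteKernel η] {f : β → ε} (hf : Measurable f) {g : δ → ζ} (hg : Measurable g) :
    (κ ∥ₖ η).map (Prod.map f g) = κ.map f ∥ₖ η.map g := by
  ext1 x
  rw [map_apply _ (hf.prodMap hg), parallelComp_apply, parallelComp_apply, map_apply _ hf,
    map_apply _ hg, Measure.map_prod_map _ _ hf hg]

end ProbabilityTheory.Kernel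

namespace MeasureTheory.Measure

variable {α β γ δ : Type*} {mα : MeasurableSpace α} {mβ : MeasurableSpace β}
  {mγ : MeasurableSpace γ} {mδ : MeasurableSpace δ}

lemma comp_map_eq_comap_comp (μ : Measure α) (κ : Kernel β γ) {f : α → β} (hf : Measurable f) :
    κ ∘ₘ μ.map f = κ.comap f hf ∘ₘ μ := by
  rw [← deterministic_comp_eq_map hf, comp_assoc, Kernel.comp_deterministic_eq_comap]

lemma fst_parallelComp_comp (ν : Measure (α × γ)) (κ : Kernel α β) [IsSFiniteKernel κ]
    (η : Kernel γ δ) [IsMarkovKernel η] : ((κ ∥ₖ η) ∘ₘ ν).fst = κ ∘ₘ ν.fst := by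
  rw [Measure.fst, map_comp _ _ measurable_fst, ← Kernel.fst_eq, Kernel.fst_parallelComp,
    Measure.fst, comp_map_eq_comap_comp]

lemma snd_parallelComp_comp (ν : Measure (α × γ)) (κ : Kernel α β) [IsMarkovKernel κ]
    (η : Kernel γ δ) [IsSFiniteKernel η] : ((κ ∥ₖ η) ∘ₘ ν).snd = η ∘ₘ ν.snd := by
  rw [Measure.snd, map_comp _ _ measurable_snd, ← Kernel.snd_eq, Kernel.snd_parallelComp,
    Measure.snd, comp_map_eq_comap_comp]

lemma parallelComp_comp_eq_self {ν : Measure (α × β)} {κ : Kernel α α} [IsSFiniteKernel κ]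
    {η : Kernel β β} [IsSFiniteKernel η] (hκ : κ =ᵐ[ν.fst] Kernel.id)
    (hη : η =ᵐ[ν.snd] Kernel.id) : (κ ∥ₖ η) ∘ₘ ν = ν := by
  have hκη : ∀ᵐ p ∂ν, (κ ∥ₖ η) p = Kernel.id p := by
    filter_upwards [ae_of_ae_map measurable_fst.aemeasurable hκ,
      ae_of_ae_map measurable_snd.aemeasurable hη] with p h₁ h₂
    rw [Kernel.parallelComp_apply, h₁, h₂, Kernel.id_apply, Kernel.id_apply, Kernel.id_apply,
      dirac_prod_dirac]
  rw [comp_congr hκη, id_comp]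

end MeasureTheory.Measure

section Coupling

variable {α β γ δ : Type*} [MeasurableSpace α] [MeasurableSpace β] [MeasurableSpace γ]
  [MeasurableSpace δ]

lemma map_prodMap_mem_coupling {μ : Measure (α × β)} {μα : Measure α} {μβ : Measure β}
    (hμ : μ ∈ Coupling μα μβ) {f : α → γ} {g : β → δ} (hf : Measurable f) (hg : Measurable g) :
    μ.map (Prod.map f g) ∈ Coupling (μα.map f) (μβ.map g) := by
  obtain ⟨hfst, hsnd⟩ := hμ
  constructor
  · rw [← hfst, Measure.fst, Measure.fst, Measure.map_map measurable_fst (hf.prodMap hg),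
      Measure.map_map hf measurable_fst]
    rfl
  · rw [← hsnd, Measure.snd, Measure.snd, Measure.map_map measurable_snd (hf.prodMap hg),
      Measure.map_map hg measurable_snd]
    rfl

lemma parallelComp_comp_mem_coupling {ν : Measure (α × β)} {μα : Measure α} {μβ : Measure β}
    (hν : ν ∈ Coupling μα μβ) (κ : Kernel α γ) [IsMarkovKernel κ] (η : Kernel β δ)
    [IsMarkovKernel η] : (κ ∥ₖ η) ∘ₘ ν ∈ Coupling (κ ∘ₘ μα) (η ∘ₘ μβ) :=
  ⟨by rw [Measure.fst_parallelComp_comp, hν.1], by rw [Measure.snd_parallelComp_comp, hν.2]⟩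

end Coupling

namespace ProbabilityTheory

variable {Ω β : Type*} [MeasurableSpace Ω] [StandardBorelSpace Ω] [Nonempty Ω]
  {mβ : MeasurableSpace β} {μ : Measure Ω} [IsFiniteMeasure μ] {f : Ω → β}

lemma condDistrib_id_comp_map (hf : Measurable f) : condDistrib id f μ ∘ₘ μ.map f = μ := by
  rw [condDistrib_comp_map hf.aemeasurable aemeasurable_id, Measure.map_id]

lemma condDistrib_id_map_ae_eq_id [StandardBorelSpace β] [Nonempty β] (hf : Measurable f) :
    (condDistrib id f μ).map f =ᵐ[μ.map f] Kernel.id :=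
  (condDistrib_comp f aemeasurable_id hf).symm.trans (condDistrib_self f)

end ProbabilityTheory

/-- **Pushforwards of couplings are exactly couplings of the pushforwards**: for Polish
spaces `X`, `Y` with Borel probability measures and Borel measurable `f : X → ℝ`,
`g : Y → ℝ`, the map `T(x,y) = (f x, g y)` satisfies
`T_* C(μX, μY) = C(f_* μX, g_* μY)`. -/
theorem map_couplings_eq_couplings_map
    {X Y : Type*} [TopologicalSpace X] [PolishSpace X] [MeasurableSpace X] [BorelSpace X]
    [TopologicalSpace Y] [PolishSpace Y] [MeasurableSpace Y] [BorelSpace Y]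
    (μX : Measure X) (μY : Measure Y) [IsProbabilityMeasure μX] [IsProbabilityMeasure μY]
    (f : X → ℝ) (g : Y → ℝ) (hf : Measurable f) (hg : Measurable g) :
    (fun μ : Measure (X × Y) => μ.map (Prod.map f g)) '' Coupling μX μY
      = Coupling (μX.map f) (μY.map g) := by
  have : Nonempty X := μX.nonempty_of_neZero
  have : Nonempty Y := μY.nonempty_of_neZero
  ext ν
  refine ⟨fun ⟨μ, hμ, hμν⟩ => hμν ▸ map_prodMap_mem_coupling hμ hf hg, fun hν => ?_⟩
  set κ := condDistrib id f μX
  set η := condDistrib id g μY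
  refine ⟨(κ ∥ₖ η) ∘ₘ ν, ?_, ?_⟩
  · simpa only [κ, η, condDistrib_id_comp_map hf,
      condDistrib_id_comp_map hg] using parallelComp_comp_mem_coupling hν κ η
  · dsimp only
    rw [Measure.map_comp _ _ (hf.prodMap hg), Kernel.map_prodMap_parallelComp _ _ hf hg]
    exact Measure.parallelComp_comp_eq_self (hν.1 ▸ condDistrib_id_map_ae_eq_id hf)
      (hν.2 ▸ condDistrib_id_map_ae_eq_id hg)
end

section
/- The Third Lower Bound equals its real-line pushforward: for measure networks X, Y and p ∈ [1,∞], inf over μ ∈ C(μ_X, μ_Y) of ‖ecc^out_{p,X,Y}‖_{L^p(μ)} equals inf over μ ∈ C(μ_X, μ_Y) of ‖C‖_{L^p(μ)}, where C(x,y) := W_p(ω_X(x,·)_*μ_X, ω_Y(y,·)_*μ_Y); indeed pointwise ecc^out_{p,X,Y}(x,y) = C(x,y). -/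
open MeasureTheory ENNReal

/-- The `p`-th Wasserstein distance between two Borel measures on `ℝ`, as an infimum of
`L^p` transport costs over couplings. -/
noncomputable def Wp (p : ℝ≥0∞) (α β : Measure ℝ) : ℝ≥0∞ :=
  ⨅ θ ∈ Coupling α β, eLpNorm (fun q : ℝ × ℝ => q.1 - q.2) p θ

/-- The `L^p` norm (with respect to `μ`) of an `ℝ≥0∞`-valued function, covering `p = ∞`
via the essential supremum. -/
noncomputable def lpNormENN {α : Type*} [MeasurableSpace α] (p : ℝ≥0∞)
    (f : α → ℝ≥0∞) (μ : Measure α) : ℝ≥0∞ :=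
  if p = ∞ then essSup f μ else (∫⁻ a, f a ^ p.toReal ∂μ) ^ (1 / p.toReal)

/-- The outgoing joint eccentricity function
`ecc^out_{p,X,Y}(s,t) = inf over couplings ν of ‖ω_X(s,·) − ω_Y(t,·)‖_{L^p(ν)}`. -/
noncomputable def eccOutJoint {X Y : Type*} [MeasurableSpace X] [MeasurableSpace Y]
    (p : ℝ≥0∞) (ωX : X × X → ℝ) (ωY : Y × Y → ℝ) (μX : Measure X) (μY : Measure Y)
    (s : X) (t : Y) : ℝ≥0∞ :=
  ⨅ ν ∈ Coupling μX μY, eLpNorm (fun q : X × Y => ωX (s, q.1) - ωY (t, q.2)) p ν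

open ProbabilityTheory

/-- The conditional kernel of the graph measure `μ.map (fun x => (f x, x))` is a.e.
concentrated on the fiber `{x | f x = r}`. -/
lemma condKernel_graph_ae {Z : Type*} [MeasurableSpace Z] [StandardBorelSpace Z] [Nonempty Z]
    (μ : Measure Z) [IsProbabilityMeasure μ] (f : Z → ℝ) (hf : Measurable f) :
    ∀ᵐ r ∂(μ.map f), (μ.map (fun x => (f x, x))).condKernel r {x | f x = r} = 1 := by
  set ρ : Measure (ℝ × Z) := μ.map (fun x => (f x, x)) with hρ
  have hmap : Measurable (fun x => (f x, x)) := hf.prodMk measurable_id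
  have hρprob : IsProbabilityMeasure ρ := Measure.isProbabilityMeasure_map hmap.aemeasurable
  have hfst : ρ.fst = μ.map f := Measure.fst_map_prodMk measurable_id
  set κ := ρ.condKernel with hκ
  have hG : MeasurableSet {q : ℝ × Z | f q.2 = q.1} :=
    measurableSet_eq_fun (hf.comp measurable_snd) measurable_fst
  have hρG : ρ {q : ℝ × Z | f q.2 = q.1} = 1 := by
    rw [hρ, Measure.map_apply hmap hG]
    simp
  have hdis : ρ.fst ⊗ₘ κ = ρ := ρ.disintegrate κ
  have hint : ∫⁻ r, κ r {x | f x = r} ∂(μ.map f) = 1 := by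
    have h2 : (ρ.fst ⊗ₘ κ) {q : ℝ × Z | f q.2 = q.1}
        = ∫⁻ a, κ a (Prod.mk a ⁻¹' {q : ℝ × Z | f q.2 = q.1}) ∂ρ.fst :=
      Measure.compProd_apply hG
    rw [hdis, hρG, hfst] at h2
    rw [h2]
    rfl
  have hmeas : Measurable (fun r => κ r {x | f x = r}) := by
    have := Kernel.measurable_kernel_prodMk_left (κ := κ) hG
    exact this
  rw [← hfst]
  have hle : ∀ r, κ r {x | f x = r} ≤ 1 := fun r => prob_le_one
  have hzero : ∫⁻ r, (1 - κ r {x | f x = r}) ∂ρ.fst = 0 := by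
    rw [lintegral_sub hmeas]
    · have : IsProbabilityMeasure (μ.map f) := Measure.isProbabilityMeasure_map hf.aemeasurable
      rw [hfst, hint, lintegral_one]
      simp
    · rw [hfst, hint]; exact one_ne_top
    · exact Filter.Eventually.of_forall hle
  have := (lintegral_eq_zero_iff (measurable_const.sub hmeas)).mp hzero
  filter_upwards [this] with r hr
  have : (1 : ℝ≥0∞) ≤ κ r {x | f x = r} := by
    simpa [tsub_eq_zero_iff_le] using hr
  exact le_antisymm (hle r) this

/-- Pointwise identity: the infimal transport cost between `f` and `g` over couplings of
`μX, μY` equals the Wasserstein cost between the pushforwards `f_*μX` and `g_*μY`. -/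
lemma infCost_eq_wp
    {X Y : Type*} [MeasurableSpace X] [StandardBorelSpace X]
    [MeasurableSpace Y] [StandardBorelSpace Y]
    (μX : Measure X) (μY : Measure Y) [IsProbabilityMeasure μX] [IsProbabilityMeasure μY]
    (f : X → ℝ) (g : Y → ℝ) (hf : Measurable f) (hg : Measurable g) (p : ℝ≥0∞) :
    (⨅ ν ∈ Coupling μX μY, eLpNorm (fun q : X × Y => f q.1 - g q.2) p ν)
      = Wp p (μX.map f) (μY.map g) := by
  have hneX : Nonempty X := by
    by_contra h
    rw [not_nonempty_iff] at h
    have h1 : μX Set.univ = 1 := measure_univ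
    rw [Set.univ_eq_empty_iff.mpr h, measure_empty] at h1
    exact zero_ne_one h1
  have hneY : Nonempty Y := by
    by_contra h
    rw [not_nonempty_iff] at h
    have h1 : μY Set.univ = 1 := measure_univ
    rw [Set.univ_eq_empty_iff.mpr h, measure_empty] at h1
    exact zero_ne_one h1
  refine le_antisymm ?_ ?_
  · -- inf over couplings of μX μY ≤ Wp : lift couplings of pushforwards
    refine le_iInf₂ fun θ hθ => ?_
    obtain ⟨hθ1, hθ2⟩ := hθ
    have hθprob : IsProbabilityMeasure θ := by
      have : IsProbabilityMeasure (μX.map f) := Measure.isProbabilityMeasure_map hf.aemeasurable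
      constructor
      rw [← Measure.fst_univ, hθ1]
      exact measure_univ
    -- disintegration kernels of the graph measures
    set ρX : Measure (ℝ × X) := μX.map (fun x => (f x, x)) with hρX
    set ρY : Measure (ℝ × Y) := μY.map (fun y => (g y, y)) with hρY
    have hmapX : Measurable (fun x => (f x, x)) := hf.prodMk measurable_id
    have hmapY : Measurable (fun y => (g y, y)) := hg.prodMk measurable_id
    have hρXprob : IsProbabilityMeasure ρX := Measure.isProbabilityMeasure_map hmapX.aemeasurable
    have hρYprob : IsProbabilityMeasure ρY := Measure.isProbabilityMeasure_map hmapY.aemeasurable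
    set η := ρX.condKernel with hη
    set lam := ρY.condKernel with hlam
    set K : Kernel (ℝ × ℝ) (X × Y) :=
      (η.comap Prod.fst measurable_fst) ×ₖ (lam.comap Prod.snd measurable_snd) with hK
    have hKmarkov : IsMarkovKernel K := by rw [hK]; infer_instance
    have hKapply : ∀ r : ℝ × ℝ, K r = (η r.1).prod (lam r.2) := by
      intro r
      rw [hK, Kernel.prod_apply, Kernel.comap_apply, Kernel.comap_apply]
    set π : Measure ((ℝ × ℝ) × (X × Y)) := θ ⊗ₘ K with hπ
    set ν : Measure (X × Y) := π.map Prod.snd with hν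
    have hρXfst : ρX.fst = μX.map f := Measure.fst_map_prodMk measurable_id
    have hρYfst : ρY.fst = μY.map g := Measure.fst_map_prodMk measurable_id
    -- first marginal
    have hν1 : ν.fst = μX := by
      ext s hs
      rw [Measure.fst_apply hs, hν, Measure.map_apply measurable_snd (measurable_fst hs)]
      have hset : MeasurableSet (Prod.snd ⁻¹' (Prod.fst ⁻¹' s) :
          Set ((ℝ × ℝ) × (X × Y))) := measurable_snd (measurable_fst hs)
      rw [hπ, Measure.compProd_apply hset]
      have heq : ∀ r : ℝ × ℝ, K r (Prod.mk r ⁻¹' (Prod.snd ⁻¹' (Prod.fst ⁻¹' s)))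
          = η r.1 s := by
        intro r
        have : (Prod.mk r ⁻¹' (Prod.snd ⁻¹' (Prod.fst ⁻¹' s)) : Set (X × Y))
            = s ×ˢ Set.univ := by
          ext q; simp [Set.mem_prod]
        rw [this, hKapply r, Measure.prod_prod, measure_univ, mul_one]
      simp_rw [heq]
      have hθfst : θ.map Prod.fst = μX.map f := hθ1
      rw [show ∫⁻ r : ℝ × ℝ, η r.1 s ∂θ
            = ∫⁻ r1, η r1 s ∂(θ.map Prod.fst) from
          (lintegral_map (Kernel.measurable_coe η hs) measurable_fst).symm,
        hθfst, ← hρXfst]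
      have h3 : (ρX.fst ⊗ₘ η) (Set.univ ×ˢ s) = ∫⁻ r1 in Set.univ, η r1 s ∂ρX.fst :=
        Measure.compProd_apply_prod MeasurableSet.univ hs
      rw [setLIntegral_univ] at h3
      rw [← h3, ρX.disintegrate η, hρX,
        Measure.map_apply hmapX (MeasurableSet.univ.prod hs)]
      congr 1
      ext x; simp
    -- second marginal
    have hν2 : ν.snd = μY := by
      ext s hs
      rw [Measure.snd_apply hs, hν, Measure.map_apply measurable_snd (measurable_snd hs)]
      have hset : MeasurableSet (Prod.snd ⁻¹' (Prod.snd ⁻¹' s) :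
          Set ((ℝ × ℝ) × (X × Y))) := measurable_snd (measurable_snd hs)
      rw [hπ, Measure.compProd_apply hset]
      have heq : ∀ r : ℝ × ℝ, K r (Prod.mk r ⁻¹' (Prod.snd ⁻¹' (Prod.snd ⁻¹' s)))
          = lam r.2 s := by
        intro r
        have : (Prod.mk r ⁻¹' (Prod.snd ⁻¹' (Prod.snd ⁻¹' s)) : Set (X × Y))
            = Set.univ ×ˢ s := by
          ext q; simp [Set.mem_prod]
        rw [this, hKapply r, Measure.prod_prod, measure_univ, one_mul]
      simp_rw [heq]
      have hθsnd : θ.map Prod.snd = μY.map g := hθ2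
      rw [show ∫⁻ r : ℝ × ℝ, lam r.2 s ∂θ
            = ∫⁻ r2, lam r2 s ∂(θ.map Prod.snd) from
          (lintegral_map (Kernel.measurable_coe lam hs) measurable_snd).symm,
        hθsnd, ← hρYfst]
      have h3 : (ρY.fst ⊗ₘ lam) (Set.univ ×ˢ s) = ∫⁻ r2 in Set.univ, lam r2 s ∂ρY.fst :=
        Measure.compProd_apply_prod MeasurableSet.univ hs
      rw [setLIntegral_univ] at h3
      rw [← h3, ρY.disintegrate lam, hρY,
        Measure.map_apply hmapY (MeasurableSet.univ.prod hs)]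
      congr 1
      ext y; simp
    -- cost equality
    have hae : ∀ᵐ w ∂π, f w.2.1 = w.1.1 ∧ g w.2.2 = w.1.2 := by
      apply Measure.ae_compProd_of_ae_ae
        (p := fun w : (ℝ × ℝ) × (X × Y) => f w.2.1 = w.1.1 ∧ g w.2.2 = w.1.2)
      · exact (measurableSet_eq_fun (hf.comp (measurable_fst.comp measurable_snd))
            (measurable_fst.comp measurable_fst)).inter
          (measurableSet_eq_fun (hg.comp (measurable_snd.comp measurable_snd))
            (measurable_snd.comp measurable_fst))
      · have hηae := condKernel_graph_ae μX f hf
        have hlamae := condKernel_graph_ae μY g hg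
        rw [← hθ1] at hηae
        rw [← hθ2] at hlamae
        have hηae' : ∀ᵐ r : ℝ × ℝ ∂θ, η r.1 {x | f x = r.1} = 1 :=
          ae_of_ae_map measurable_fst.aemeasurable hηae
        have hlamae' : ∀ᵐ r : ℝ × ℝ ∂θ, lam r.2 {y | g y = r.2} = 1 :=
          ae_of_ae_map measurable_snd.aemeasurable hlamae
        filter_upwards [hηae', hlamae'] with r h1 h2
        have hrect : (K r) ({x | f x = r.1} ×ˢ {y | g y = r.2}) = 1 := by
          rw [hKapply r, Measure.prod_prod, h1, h2, mul_one]
        have hKr : IsProbabilityMeasure (K r) := hKmarkov.isProbabilityMeasure r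
        have hms : MeasurableSet ({x | f x = r.1} ×ˢ {y | g y = r.2} : Set (X × Y)) :=
          (measurableSet_eq_fun hf measurable_const).prod
            (measurableSet_eq_fun hg measurable_const)
        have hcompl : (K r) ({x | f x = r.1} ×ˢ {y | g y = r.2})ᶜ = 0 := by
          rw [measure_compl hms (measure_ne_top _ _), hrect, measure_univ, tsub_self]
        rw [Filter.eventually_iff, mem_ae_iff]
        refine measure_mono_null ?_ hcompl
        apply Set.compl_subset_compl.mpr
        rintro ⟨x, y⟩ ⟨hx, hy⟩
        exact ⟨hx, hy⟩
    have hcost : eLpNorm (fun q : X × Y => f q.1 - g q.2) p ν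
        = eLpNorm (fun r : ℝ × ℝ => r.1 - r.2) p θ := by
      have ha : eLpNorm (fun q : X × Y => f q.1 - g q.2) p ν
          = eLpNorm ((fun q : X × Y => f q.1 - g q.2) ∘ Prod.snd) p π := by
        rw [hν]
        exact eLpNorm_map_measure
          (((hf.comp measurable_fst).sub (hg.comp measurable_snd)).aestronglyMeasurable)
          measurable_snd.aemeasurable
      have hb : eLpNorm ((fun q : X × Y => f q.1 - g q.2) ∘ Prod.snd) p π
          = eLpNorm (fun w : (ℝ × ℝ) × (X × Y) => w.1.1 - w.1.2) p π := by
        apply eLpNorm_congr_ae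
        filter_upwards [hae] with w hw
        simp only [Function.comp_apply, hw.1, hw.2]
      have hπfst : π.map Prod.fst = θ := by
        have : SFinite θ := inferInstance
        have := Measure.fst_compProd θ K
        rw [← hπ] at this
        exact this
      have hc : eLpNorm (fun r : ℝ × ℝ => r.1 - r.2) p θ
          = eLpNorm ((fun r : ℝ × ℝ => r.1 - r.2) ∘ Prod.fst) p π := by
        rw [← hπfst]
        exact eLpNorm_map_measure
          ((measurable_fst.sub measurable_snd).aestronglyMeasurable)
          measurable_fst.aemeasurable
      rw [ha, hb, hc]
      rfl
    exact iInf₂_le_of_le ν ⟨hν1, hν2⟩ (le_of_eq hcost)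
  · -- Wp ≤ inf : push couplings forward
    refine le_iInf₂ fun ν hν => ?_
    obtain ⟨hν1, hν2⟩ := hν
    have hmeasθ : Measurable (fun q : X × Y => (f q.1, g q.2)) :=
      (hf.comp measurable_fst).prodMk (hg.comp measurable_snd)
    set θ : Measure (ℝ × ℝ) := ν.map (fun q : X × Y => (f q.1, g q.2)) with hθ
    have hθ1 : θ.fst = μX.map f := by
      have h := Measure.fst_map_prodMk (μ := ν) (X := fun q : X × Y => f q.1)
        (Y := fun q : X × Y => g q.2) (hg.comp measurable_snd)
      rw [hθ, h, ← hν1, Measure.fst, Measure.map_map hf measurable_fst]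
      rfl
    have hθ2 : θ.snd = μY.map g := by
      have h := Measure.snd_map_prodMk (μ := ν) (X := fun q : X × Y => f q.1)
        (Y := fun q : X × Y => g q.2) (hf.comp measurable_fst)
      rw [hθ, h, ← hν2, Measure.snd, Measure.map_map hg measurable_snd]
      rfl
    have hcost : eLpNorm (fun r : ℝ × ℝ => r.1 - r.2) p θ
        = eLpNorm (fun q : X × Y => f q.1 - g q.2) p ν := by
      rw [hθ]
      have := eLpNorm_map_measure (μ := ν) (f := fun q : X × Y => (f q.1, g q.2))
        (g := fun r : ℝ × ℝ => r.1 - r.2) (p := p)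
        ((measurable_fst.sub measurable_snd).aestronglyMeasurable)
        hmeasθ.aemeasurable
      rw [this]
      rfl
    exact iInf₂_le_of_le θ ⟨hθ1, hθ2⟩ (le_of_eq hcost)


/-- **TLB = ℝ-TLB**: the joint eccentricity equals pointwise the Wasserstein cost
`C(x,y) = W_p(ω_X(x,·)_*μ_X, ω_Y(y,·)_*μ_Y)`, and hence the two coupling infima
(the Third Lower Bound and its real-line pushforward) coincide. -/
theorem tlb_eq_rtlb
    {X Y : Type*} [TopologicalSpace X] [PolishSpace X] [MeasurableSpace X] [BorelSpace X]
    [TopologicalSpace Y] [PolishSpace Y] [MeasurableSpace Y] [BorelSpace Y]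
    (μX : Measure X) (μY : Measure Y) [IsProbabilityMeasure μX] [IsProbabilityMeasure μY]
    (ωX : X × X → ℝ) (ωY : Y × Y → ℝ)
    (hωX : Measurable ωX) (hωY : Measurable ωY)
    (hbX : ∃ M, ∀ q, |ωX q| ≤ M) (hbY : ∃ M, ∀ q, |ωY q| ≤ M)
    (p : ℝ≥0∞) (hp : 1 ≤ p) :
    (∀ (x : X) (y : Y),
      eccOutJoint p ωX ωY μX μY x y
        = Wp p (μX.map fun x' => ωX (x, x')) (μY.map fun y' => ωY (y, y'))) ∧
    (⨅ μ ∈ Coupling μX μY,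
        lpNormENN p (fun q : X × Y => eccOutJoint p ωX ωY μX μY q.1 q.2) μ)
      = ⨅ μ ∈ Coupling μX μY,
          lpNormENN p (fun q : X × Y =>
            Wp p (μX.map fun x' => ωX (q.1, x')) (μY.map fun y' => ωY (q.2, y'))) μ := by

  have h1 : ∀ (x : X) (y : Y),
      eccOutJoint p ωX ωY μX μY x y
        = Wp p (μX.map fun x' => ωX (x, x')) (μY.map fun y' => ωY (y, y')) := by
    intro x y
    have hf : Measurable (fun x' => ωX (x, x')) := hωX.comp measurable_prodMk_left
    have hg : Measurable (fun y' => ωY (y, y')) := hωY.comp measurable_prodMk_left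
    exact infCost_eq_wp μX μY _ _ hf hg p
  refine ⟨h1, ?_⟩
  refine iInf_congr fun μ => iInf_congr fun _ => ?_
  congr 1
  funext q
  exact h1 q.1 q.2
end

section
/- The First Lower Bound and its real-line form: for measure networks X, Y and p ∈ [1,∞], inf over μ ∈ C(μ_X,μ_Y) of ‖ecc^out_{p,X,Y}‖_{L^p(μ)} ≥ inf over μ ∈ C(μ_X,μ_Y) of ‖ecc^out_{p,X} ∘ π_X − ecc^out_{p,Y} ∘ π_Y‖_{L^p(μ)}, and the latter equals W_p((ecc^out_{p,X})_*μ_X, (ecc^out_{p,Y})_*μ_Y). -/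
/-!
For a coupling `ν` of `μX` and `μY`, the functions `ωX (s, ·) ∘ π_X` and `ωY (t, ·) ∘ π_Y` have
`L^p(ν)`-norms `ecc_X s` and `ecc_Y t`, so the reverse triangle inequality bounds
`|ecc_X s - ecc_Y t|` by the joint eccentricity; integrating gives the inequality.
Pushing a coupling of `μX, μY` forward along `ecc_X × ecc_Y` preserves the cost, and every coupling
`θ` of the pushforward measures arises this way: disintegrate `μX` and `μY` along the
eccentricities and glue the conditional laws of the fibres along `θ`.
-/

open MeasureTheory ENNReal

/-- The outgoing eccentricity function `ecc^out_{p,X}(s) = ‖ω_X(s,·)‖_{L^p(μ_X)}`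
(as a real number; it is finite since the weight function is bounded). -/
noncomputable def eccOut {X : Type*} [MeasurableSpace X]
    (p : ℝ≥0∞) (ωX : X × X → ℝ) (μX : Measure X) (s : X) : ℝ :=
  (eLpNorm (fun x' => ωX (s, x')) p μX).toReal

open ProbabilityTheory

section Measurability

variable {α β : Type*} [MeasurableSpace α] [MeasurableSpace β] {μ : Measure β} [SFinite μ]

lemma measurable_essSup_prodMk_left {f : α × β → ℝ≥0∞} (hf : Measurable f) :
    Measurable fun a => essSup (fun b => f (a, b)) μ := by
  refine measurable_of_Iic fun c => ?_
  have hslice : (fun a => essSup (fun b => f (a, b)) μ) ⁻¹' Set.Iic c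
      = {a | μ (Prod.mk a ⁻¹' {q | c < f q}) = 0} := by
    ext a
    have hle : essSup (fun b => f (a, b)) μ ≤ c ↔ ∀ᵐ b ∂μ, f (a, b) ≤ c :=
      ⟨fun h => (ae_le_essSup _).mono fun b hb => hb.trans h, essSup_le_of_ae_le c⟩
    simp only [Set.mem_preimage, Set.mem_Iic, hle, ae_iff, not_le]
    rfl
  rw [hslice]
  exact measurable_measure_prodMk_left (measurableSet_lt measurable_const hf)
    (measurableSet_singleton 0)

lemma measurable_eLpNorm_prodMk_left {E : Type*} [NormedAddCommGroup E] [MeasurableSpace E]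
    [OpensMeasurableSpace E] {f : α × β → E} (hf : Measurable f) (p : ℝ≥0∞) :
    Measurable fun a => eLpNorm (fun b => f (a, b)) p μ := by
  by_cases hp0 : p = 0
  · simp only [hp0, eLpNorm_exponent_zero, measurable_const]
  by_cases hptop : p = ∞
  · simp only [hptop, eLpNorm_exponent_top]
    exact measurable_essSup_prodMk_left (f := fun q => ‖f q‖ₑ) hf.enorm
  · simp only [eLpNorm_eq_lintegral_rpow_enorm_toReal hp0 hptop]
    exact (Measurable.lintegral_prod_right' (f := fun q => ‖f q‖ₑ ^ p.toReal)
      (hf.enorm.pow_const _)).pow_const _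

end Measurability

lemma measurable_eccOut {α : Type*} [MeasurableSpace α] (p : ℝ≥0∞) {ω : α × α → ℝ}
    (hω : Measurable ω) (μ : Measure α) [SFinite μ] : Measurable (eccOut p ω μ) :=
  (measurable_eLpNorm_prodMk_left hω p).ennreal_toReal

lemma ENNReal.enorm_toReal_sub_toReal_le {a b d : ℝ≥0∞} (hab : a ≤ d + b) (hba : b ≤ d + a) :
    ‖a.toReal - b.toReal‖ₑ ≤ d := by
  -- for finite `d`, `a` and `b` are finite or infinite together (and `toReal ∞ = 0`)
  rcases eq_or_ne d ∞ with rfl | hd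
  · exact le_top
  rcases eq_or_ne a ∞ with rfl | ha
  · have hb : b = ∞ := by simpa [hd] using hab
    simp [hb]
  rcases eq_or_ne b ∞ with rfl | hb
  · simp [hd, ha] at hba
  rw [Real.enorm_eq_ofReal_abs, ← ENNReal.ofReal_toReal hd]
  refine ENNReal.ofReal_le_ofReal (abs_sub_le_iff.mpr ⟨?_, ?_⟩)
  · have := ENNReal.toReal_mono (ENNReal.add_ne_top.mpr ⟨hd, hb⟩) hab
    rw [ENNReal.toReal_add hd hb] at this
    linarith
  · have := ENNReal.toReal_mono (ENNReal.add_ne_top.mpr ⟨hd, ha⟩) hba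
    rw [ENNReal.toReal_add hd ha] at this
    linarith

lemma enorm_toReal_eLpNorm_sub_le {α E : Type*} [MeasurableSpace α] [NormedAddCommGroup E]
    {μ : Measure α} {p : ℝ≥0∞} (hp : 1 ≤ p) {f g : α → E} (hf : AEStronglyMeasurable f μ)
    (hg : AEStronglyMeasurable g μ) :
    ‖(eLpNorm f p μ).toReal - (eLpNorm g p μ).toReal‖ₑ ≤ eLpNorm (f - g) p μ := by
  refine ENNReal.enorm_toReal_sub_toReal_le ?_ ?_
  · simpa using eLpNorm_add_le (hf.sub hg) hg hp
  · simpa [eLpNorm_sub_comm g f] using eLpNorm_add_le (hg.sub hf) hf hp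

section Coupling

variable {X Y : Type*} [MeasurableSpace X] [MeasurableSpace Y] {μX : Measure X} {μY : Measure Y}
  {ν : Measure (X × Y)}

lemma eLpNorm_comp_fst_of_mem_coupling {E : Type*} [NormedAddCommGroup E] {f : X → E}
    (hf : AEStronglyMeasurable f μX) (hν : ν ∈ Coupling μX μY) (p : ℝ≥0∞) :
    eLpNorm (fun q => f q.1) p ν = eLpNorm f p μX := by
  rw [← hν.1] at hf ⊢
  exact (eLpNorm_map_measure hf measurable_fst.aemeasurable).symm

lemma eLpNorm_comp_snd_of_mem_coupling {E : Type*} [NormedAddCommGroup E] {g : Y → E}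
    (hg : AEStronglyMeasurable g μY) (hν : ν ∈ Coupling μX μY) (p : ℝ≥0∞) :
    eLpNorm (fun q => g q.2) p ν = eLpNorm g p μY := by
  rw [← hν.2] at hg ⊢
  exact (eLpNorm_map_measure hg measurable_snd.aemeasurable).symm

lemma map_prodMap_mem_coupling_s11 {α β : Type*} [MeasurableSpace α] [MeasurableSpace β]
    {f : X → α} {g : Y → β} (hf : Measurable f) (hg : Measurable g) (hν : ν ∈ Coupling μX μY) :
    ν.map (Prod.map f g) ∈ Coupling (μX.map f) (μY.map g) := by
  refine ⟨?_, ?_⟩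
  · rw [Measure.fst, Measure.map_map measurable_fst (hf.prodMap hg), ← hν.1, Measure.fst,
      Measure.map_map hf measurable_fst]
    rfl
  · rw [Measure.snd, Measure.map_map measurable_snd (hf.prodMap hg), ← hν.2, Measure.snd,
      Measure.map_map hg measurable_snd]
    rfl

lemma enorm_eccOut_sub_eccOut_le_eccOutJoint {ωX : X × X → ℝ} {ωY : Y × Y → ℝ}
    (hωX : Measurable ωX) (hωY : Measurable ωY) {p : ℝ≥0∞} (hp : 1 ≤ p) (s : X) (t : Y) :
    ‖eccOut p ωX μX s - eccOut p ωY μY t‖ₑ ≤ eccOutJoint p ωX ωY μX μY s t := by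
  refine le_iInf₂ fun ν hν => ?_
  have hfs : Measurable fun x => ωX (s, x) := hωX.comp measurable_prodMk_left
  have hgt : Measurable fun y => ωY (t, y) := hωY.comp measurable_prodMk_left
  rw [eccOut, eccOut, ← eLpNorm_comp_fst_of_mem_coupling hfs.aestronglyMeasurable hν,
    ← eLpNorm_comp_snd_of_mem_coupling hgt.aestronglyMeasurable hν]
  exact enorm_toReal_eLpNorm_sub_le hp (hfs.comp measurable_fst).aestronglyMeasurable
    (hgt.comp measurable_snd).aestronglyMeasurable

end Coupling

lemma eLpNorm_eq_lpNormENN {α E : Type*} [MeasurableSpace α] [NormedAddCommGroup E]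
    {p : ℝ≥0∞} (hp : p ≠ 0) (f : α → E) (μ : Measure α) :
    eLpNorm f p μ = lpNormENN p (fun a => ‖f a‖ₑ) μ := by
  by_cases hptop : p = ∞
  · simp only [hptop, lpNormENN, eLpNorm_exponent_top, eLpNormEssSup, if_true]
  · rw [eLpNorm_eq_lintegral_rpow_enorm_toReal hp hptop, lpNormENN, if_neg hptop]

lemma lpNormENN_mono {α : Type*} [MeasurableSpace α] (p : ℝ≥0∞) {f g : α → ℝ≥0∞}
    (μ : Measure α) (h : f ≤ g) : lpNormENN p f μ ≤ lpNormENN p g μ := by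
  unfold lpNormENN
  split_ifs
  · exact essSup_mono_ae (Filter.Eventually.of_forall h)
  · gcongr
    exact h _

section Disintegration

variable {Ω α : Type*} [MeasurableSpace Ω] [StandardBorelSpace Ω] [Nonempty Ω]
  [MeasurableSpace α] (μ : Measure Ω) [IsFiniteMeasure μ] {e : Ω → α}

noncomputable def fiberKernel (e : Ω → α) : Kernel α Ω :=
  (μ.map fun x => (e x, x)).condKernel

instance : IsMarkovKernel (fiberKernel μ e) := by
  unfold fiberKernel
  infer_instance

lemma compProd_fiberKernel :
    μ.map e ⊗ₘ fiberKernel μ e = μ.map fun x => (e x, x) := by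
  have hfst : (μ.map fun x => (e x, x)).fst = μ.map e := Measure.fst_map_prodMk measurable_id
  rw [fiberKernel, ← hfst]
  exact Measure.disintegrate _ _

lemma fiberKernel_comp_map (he : Measurable e) : fiberKernel μ e ∘ₘ μ.map e = μ := by
  rw [← Measure.snd_compProd (μ.map e), compProd_fiberKernel μ]
  exact (Measure.snd_map_prodMk he).trans Measure.map_id'

lemma ae_map_fiberKernel_eq_dirac [MeasurableEq α] (he : Measurable e) :
    ∀ᵐ a ∂μ.map e, (fiberKernel μ e a).map e = Measure.dirac a := by
  have hgraph : ∀ᵐ z ∂(μ.map e ⊗ₘ fiberKernel μ e), e z.2 = z.1 := by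
    rw [compProd_fiberKernel μ]
    exact (ae_map_iff (he.prodMk measurable_id).aemeasurable
      (measurableSet_eq_fun (he.comp measurable_snd) measurable_fst)).mpr
      (Filter.Eventually.of_forall fun _ => rfl)
  filter_upwards [Measure.ae_ae_of_ae_compProd hgraph] with a ha
  rw [Measure.map_congr ha, Measure.map_const, measure_univ, one_smul]

end Disintegration

section ParallelComp

variable {α β γ δ : Type*} [MeasurableSpace α] [MeasurableSpace β] [MeasurableSpace γ]
  [MeasurableSpace δ]

lemma fst_comp_parallelComp (θ : Measure (α × γ)) (κ : Kernel α β) [IsSFiniteKernel κ]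
    (η : Kernel γ δ) [IsMarkovKernel η] : ((κ ∥ₖ η) ∘ₘ θ).fst = κ ∘ₘ θ.fst := by
  ext s hs
  rw [Measure.fst_apply hs, Measure.bind_apply (measurable_fst hs) (Kernel.aemeasurable _),
    Measure.bind_apply hs κ.aemeasurable, Measure.fst, lintegral_map (κ.measurable_coe hs)
    measurable_fst]
  congr with q
  rw [← Set.prod_univ, Kernel.parallelComp_apply_prod, measure_univ, mul_one]

lemma snd_comp_parallelComp (θ : Measure (α × γ)) (κ : Kernel α β) [IsMarkovKernel κ]
    (η : Kernel γ δ) [IsSFiniteKernel η] : ((κ ∥ₖ η) ∘ₘ θ).snd = η ∘ₘ θ.snd := by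
  ext s hs
  rw [Measure.snd_apply hs, Measure.bind_apply (measurable_snd hs) (Kernel.aemeasurable _),
    Measure.bind_apply hs η.aemeasurable, Measure.snd, lintegral_map (η.measurable_coe hs)
    measurable_snd]
  congr with q
  rw [← Set.univ_prod, Kernel.parallelComp_apply_prod, measure_univ, one_mul]

end ParallelComp

theorem exists_mem_coupling_map_prodMap_eq {X Y α β : Type*} [MeasurableSpace X]
    [StandardBorelSpace X] [Nonempty X] [MeasurableSpace Y] [StandardBorelSpace Y] [Nonempty Y]
    [MeasurableSpace α] [MeasurableEq α] [MeasurableSpace β] [MeasurableEq β]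
    {μX : Measure X} {μY : Measure Y} [IsFiniteMeasure μX] [IsFiniteMeasure μY]
    {f : X → α} {g : Y → β} (hf : Measurable f) (hg : Measurable g)
    {θ : Measure (α × β)} (hθ : θ ∈ Coupling (μX.map f) (μY.map g)) :
    ∃ ν ∈ Coupling μX μY, ν.map (Prod.map f g) = θ := by
  refine ⟨(fiberKernel μX f ∥ₖ fiberKernel μY g) ∘ₘ θ, ⟨?_, ?_⟩, ?_⟩
  · rw [fst_comp_parallelComp, hθ.1, fiberKernel_comp_map μX hf]
  · rw [snd_comp_parallelComp, hθ.2, fiberKernel_comp_map μY hg]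
  have hfib : ∀ᵐ ab ∂θ, (fiberKernel μX f ab.1).map f = Measure.dirac ab.1 ∧
      (fiberKernel μY g ab.2).map g = Measure.dirac ab.2 := by
    have hX := ae_map_fiberKernel_eq_dirac μX hf
    have hY := ae_map_fiberKernel_eq_dirac μY hg
    rw [← hθ.1] at hX
    rw [← hθ.2] at hY
    exact (ae_of_ae_map measurable_fst.aemeasurable hX).and
      (ae_of_ae_map measurable_snd.aemeasurable hY)
  rw [Measure.map_comp _ _ (hf.prodMap hg)]
  conv_rhs => rw [← Measure.id_comp (μ := θ)]
  refine Measure.comp_congr (hfib.mono fun ab ⟨hX, hY⟩ => ?_)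
  rw [Kernel.map_apply _ (hf.prodMap hg), Kernel.parallelComp_apply,
    ← Measure.map_prod_map _ _ hf hg, hX, hY, Measure.dirac_prod_dirac, Kernel.id_apply]

theorem iInf_coupling_eLpNorm_sub_eq_Wp {X Y : Type*} [MeasurableSpace X]
    [StandardBorelSpace X] [Nonempty X] [MeasurableSpace Y] [StandardBorelSpace Y] [Nonempty Y]
    {μX : Measure X} {μY : Measure Y} [IsFiniteMeasure μX] [IsFiniteMeasure μY]
    {f : X → ℝ} {g : Y → ℝ} (hf : Measurable f) (hg : Measurable g) (p : ℝ≥0∞) :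
    ⨅ ν ∈ Coupling μX μY, eLpNorm (fun q => f q.1 - g q.2) p ν = Wp p (μX.map f) (μY.map g) := by
  have hcost (ν : Measure (X × Y)) : eLpNorm (fun q => f q.1 - g q.2) p ν
      = eLpNorm (fun r : ℝ × ℝ => r.1 - r.2) p (ν.map (Prod.map f g)) :=
    (eLpNorm_map_measure (measurable_fst.sub measurable_snd).aestronglyMeasurable
      (hf.prodMap hg).aemeasurable).symm
  refine le_antisymm (le_iInf₂ fun θ hθ => ?_) (le_iInf₂ fun ν hν => ?_)
  · obtain ⟨ν, hν, rfl⟩ := exists_mem_coupling_map_prodMap_eq hf hg hθ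
    exact (iInf₂_le ν hν).trans_eq (hcost ν)
  · exact (iInf₂_le _ (map_prodMap_mem_coupling_s11 hf hg hν)).trans_eq (hcost ν).symm

theorem first_lower_bound_general
    {X Y : Type*} [TopologicalSpace X] [PolishSpace X] [MeasurableSpace X] [BorelSpace X]
    [TopologicalSpace Y] [PolishSpace Y] [MeasurableSpace Y] [BorelSpace Y]
    (μX : Measure X) (μY : Measure Y) [IsProbabilityMeasure μX] [IsProbabilityMeasure μY]
    (ωX : X × X → ℝ) (ωY : Y × Y → ℝ)
    (hωX : Measurable ωX) (hωY : Measurable ωY)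
    (p : ℝ≥0∞) (hp : 1 ≤ p) :
    (⨅ μ ∈ Coupling μX μY,
        eLpNorm (fun q : X × Y => eccOut p ωX μX q.1 - eccOut p ωY μY q.2) p μ)
      ≤ (⨅ μ ∈ Coupling μX μY,
          lpNormENN p (fun q : X × Y => eccOutJoint p ωX ωY μX μY q.1 q.2) μ) ∧
    (⨅ μ ∈ Coupling μX μY,
        eLpNorm (fun q : X × Y => eccOut p ωX μX q.1 - eccOut p ωY μY q.2) p μ)
      = Wp p (μX.map (eccOut p ωX μX)) (μY.map (eccOut p ωY μY)) := by
  have := nonempty_of_isProbabilityMeasure μX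
  have := nonempty_of_isProbabilityMeasure μY
  refine ⟨iInf₂_mono fun ν _ => ?_, iInf_coupling_eLpNorm_sub_eq_Wp
    (measurable_eccOut p hωX μX) (measurable_eccOut p hωY μY) p⟩
  rw [eLpNorm_eq_lpNormENN (zero_lt_one.trans_le hp).ne']
  exact lpNormENN_mono p ν fun q => enorm_eccOut_sub_eccOut_le_eccOutJoint hωX hωY hp q.1 q.2

/-- **The First Lower Bound and its real-line form**: the TLB dominates the FLB, i.e.
`inf_μ ‖ecc^out_{p,X,Y}‖_{L^p(μ)} ≥ inf_μ ‖ecc^out_{p,X} ∘ π_X − ecc^out_{p,Y} ∘ π_Y‖_{L^p(μ)}`,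
and the latter equals `W_p((ecc^out_{p,X})_*μ_X, (ecc^out_{p,Y})_*μ_Y)`. -/
theorem first_lower_bound
    {X Y : Type*} [TopologicalSpace X] [PolishSpace X] [MeasurableSpace X] [BorelSpace X]
    [TopologicalSpace Y] [PolishSpace Y] [MeasurableSpace Y] [BorelSpace Y]
    (μX : Measure X) (μY : Measure Y) [IsProbabilityMeasure μX] [IsProbabilityMeasure μY]
    (ωX : X × X → ℝ) (ωY : Y × Y → ℝ)
    (hωX : Measurable ωX) (hωY : Measurable ωY)
    (hbX : ∃ M, ∀ q, |ωX q| ≤ M) (hbY : ∃ M, ∀ q, |ωY q| ≤ M)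
    (p : ℝ≥0∞) (hp : 1 ≤ p) :
    (⨅ μ ∈ Coupling μX μY,
        eLpNorm (fun q : X × Y => eccOut p ωX μX q.1 - eccOut p ωY μY q.2) p μ)
      ≤ (⨅ μ ∈ Coupling μX μY,
          lpNormENN p (fun q : X × Y => eccOutJoint p ωX ωY μX μY q.1 q.2) μ) ∧
    (⨅ μ ∈ Coupling μX μY,
        eLpNorm (fun q : X × Y => eccOut p ωX μX q.1 - eccOut p ωY μY q.2) p μ)
      = Wp p (μX.map (eccOut p ωX μX)) (μY.map (eccOut p ωY μY)) :=
  first_lower_bound_general μX μY ωX ωY hωX hωY p hp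
end
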